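/- Let (X,T) be a simple, properly ordered Bratteli-Vershik system and let k >= 1. If x and x' are two distinct paths that are k-equivalent at infinitely many levels n > k, then x and x' have the same k-coding. -/

import Mathlib

/-!
At a level `n` where `x` and `x'` are `k`-equivalent, the Vershik map moves both paths one step up
their basic blocks, keeping the tails beyond level `n`, and the order isomorphism between the two
blocks, which fixes the first `k` edges, follows along: `T x` and `T x'` are again `k`-equivalent
at level `n` unless `x` was at the top of its block. If that happened at infinitely many of the
levels, `x` and then also `x'` would be the unique maximal path. Hence, with the symmetric argument
for `T⁻¹` and minimal paths, `T^m x` and `T^m x'` are `k`-equivalent at infinitely many levels for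
every `m ∈ ℤ`, and in particular agree up to level `k`.
-/

set_option autoImplicit false

/-- An ordered Bratteli diagram: finite nonempty vertex sets `V n`, a single root
vertex at level `0`, finite edge sets `E n` (edges from level `n` to level `n+1`,
multiple edges allowed), every vertex has an outgoing edge, every non-root vertex
an incoming edge, and the edges into each vertex carry a linear order, encoded by
the relation `elt` which relates only edges with the same target. -/
structure BDiagram where
  V : ℕ → Type
  E : ℕ → Type
  fintV : ∀ n, Fintype (V n)
  fintE : ∀ n, Fintype (E n)
  nonV : ∀ n, Nonempty (V n)
  rootSubsingleton : Subsingleton (V 0)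
  src : ∀ {n}, E n → V n
  tgt : ∀ {n}, E n → V (n + 1)
  hasOut : ∀ (n : ℕ) (v : V n), ∃ e : E n, src e = v
  hasIn : ∀ (n : ℕ) (v : V (n + 1)), ∃ e : E n, tgt e = v
  elt : ∀ {n}, E n → E n → Prop
  elt_tgt : ∀ (n : ℕ) (e f : E n), elt e f → tgt e = tgt f
  elt_irrefl : ∀ (n : ℕ) (e : E n), ¬ elt e e
  elt_trans : ∀ (n : ℕ) (e f g : E n), elt e f → elt f g → elt e g
  elt_total : ∀ (n : ℕ) (e f : E n), tgt e = tgt f → e ≠ f → elt e f ∨ elt f e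

namespace BDiagram

variable (B : BDiagram)

def castV {m n : ℕ} (h : m = n) (v : B.V m) : B.V n := h ▸ v

/-- An edge is minimal if no edge (into the same target) is below it. -/
def IsMinEdge {n : ℕ} (e : B.E n) : Prop := ∀ e' : B.E n, ¬ B.elt e' e

/-- An edge is maximal if no edge (into the same target) is above it. -/
def IsMaxEdge {n : ℕ} (e : B.E n) : Prop := ∀ e' : B.E n, ¬ B.elt e e'

/-- The space of infinite paths from the root. -/
def PathSpace : Type := { x : ∀ n, B.E n // ∀ n, B.tgt (x n) = B.src (x (n + 1)) }

def IsMinPath (x : B.PathSpace) : Prop := ∀ n, B.IsMinEdge (x.1 n)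

def IsMaxPath (x : B.PathSpace) : Prop := ∀ n, B.IsMaxEdge (x.1 n)

/-- Properly ordered: unique minimal and unique maximal path. -/
def ProperlyOrdered : Prop :=
  (∃! x : B.PathSpace, B.IsMinPath x) ∧ (∃! x : B.PathSpace, B.IsMaxPath x)

/-- The partial order on cofinal paths: `x < y` iff they eventually agree and at the
last disagreement the edge of `x` is below the edge of `y`. -/
def pathLT (x y : B.PathSpace) : Prop :=
  ∃ N : ℕ, B.elt (x.1 N) (y.1 N) ∧ ∀ n : ℕ, N < n → x.1 n = y.1 n

/-- `T` is the Vershik map: each non-maximal path goes to its successor, and each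
maximal path goes to a minimal path. -/
def IsVershik (T : B.PathSpace ≃ B.PathSpace) : Prop :=
  (∀ x : B.PathSpace, ¬ B.IsMaxPath x →
    B.pathLT x (T x) ∧ ∀ z : B.PathSpace, B.pathLT x z → ¬ B.pathLT z (T x)) ∧
  (∀ x : B.PathSpace, B.IsMaxPath x → B.IsMinPath (T x))

/-- `f` is a chain of consecutive edges on levels `[a, b)`. -/
def SegOn (f : ∀ i, B.E i) (a b : ℕ) : Prop :=
  ∀ i : ℕ, a ≤ i → i + 1 < b → B.tgt (f i) = B.src (f (i + 1))

/-- Simplicity: some telescoping has complete connections between adjacent levels. -/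
def Simple : Prop :=
  ∃ ns : ℕ → ℕ, StrictMono ns ∧ ns 0 = 0 ∧
    ∀ (l c : ℕ), ns (l + 1) = c + 1 →
      ∀ (v : B.V (ns l)) (w : B.V (c + 1)),
        ∃ f : ∀ i, B.E i, B.SegOn f (ns l) (c + 1) ∧ B.src (f (ns l)) = v ∧ B.tgt (f c) = w

/-- The natural (Cantor) topology on the path space, induced from the product of
the discrete topologies on the edge sets. -/
def pathTop : TopologicalSpace B.PathSpace :=
  TopologicalSpace.induced Subtype.val (@Pi.topologicalSpace ℕ B.E (fun _ => ⊥))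

/-- Integer iterates of a bijection of the path space. -/
def iterZ (T : B.PathSpace ≃ B.PathSpace) (m : ℤ) : B.PathSpace ≃ B.PathSpace :=
  (T : Equiv.Perm B.PathSpace) ^ m

/-- Two paths have the same `k`-coding: for every time `m` the initial segments of
`T^m x` and `T^m y` from the root to level `k` coincide. -/
def SameCoding (T : B.PathSpace ≃ B.PathSpace) (k : ℕ) (x y : B.PathSpace) : Prop :=
  ∀ (m : ℤ) (i : ℕ), i < k → ((B.iterZ T m) x).1 i = ((B.iterZ T m) y).1 i

/-- A depth `k` pair: distinct paths with the same `k`-coding but not the same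
`(k+1)`-coding. -/
def DepthPair (T : B.PathSpace ≃ B.PathSpace) (k : ℕ) (x y : B.PathSpace) : Prop :=
  x ≠ y ∧ B.SameCoding T k x y ∧ ¬ B.SameCoding T (k + 1) x y

/-- The pair `x, y` has a `j` cut: for some time `m`, both `T^m x` and `T^m y` are
minimal from the root into level `j`. -/
def HasCut (T : B.PathSpace ≃ B.PathSpace) (j : ℕ) (x y : B.PathSpace) : Prop :=
  ∃ m : ℤ, (∀ i : ℕ, i < j → B.IsMinEdge (((B.iterZ T m) x).1 i)) ∧
    (∀ i : ℕ, i < j → B.IsMinEdge (((B.iterZ T m) y).1 i))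

/-- Nonexpansive: for every `k ≥ 1` there are two distinct paths with the same
`k`-coding. -/
def Nonexpansive (T : B.PathSpace ≃ B.PathSpace) : Prop :=
  ∀ k : ℕ, 1 ≤ k → ∃ x y : B.PathSpace, x ≠ y ∧ B.SameCoding T k x y

/-- Well timed: for every `k ≥ 1` and every `j > k` there is a depth `k` pair with
a `j` cut. -/
def WellTimed (T : B.PathSpace ≃ B.PathSpace) : Prop :=
  ∀ k : ℕ, 1 ≤ k → ∀ j : ℕ, k < j →
    ∃ x y : B.PathSpace, B.DepthPair T k x y ∧ B.HasCut T j x y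

/-- Very well timed: for every `k ≥ 1` there is a depth `k` pair having a `j` cut
for every `j > k`. -/
def VeryWellTimed (T : B.PathSpace ≃ B.PathSpace) : Prop :=
  ∀ k : ℕ, 1 ≤ k →
    ∃ x y : B.PathSpace, B.DepthPair T k x y ∧ ∀ j : ℕ, k < j → B.HasCut T j x y

/-- Weakly well timed: for infinitely many `k ≥ 1`, for every `j > k` there is a
depth `k` pair with a `j` cut. -/
def WeaklyWellTimed (T : B.PathSpace ≃ B.PathSpace) : Prop :=
  ∀ K : ℕ, ∃ k : ℕ, K ≤ k ∧ 1 ≤ k ∧ ∀ j : ℕ, k < j →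
    ∃ x y : B.PathSpace, B.DepthPair T k x y ∧ B.HasCut T j x y

/-- Untimed: for every `k ≥ 1` there is a `j > k` such that no depth `k` pair has a
`j` cut. -/
def Untimed (T : B.PathSpace ≃ B.PathSpace) : Prop :=
  ∀ k : ℕ, 1 ≤ k → ∃ j : ℕ, k < j ∧
    ∀ x y : B.PathSpace, B.DepthPair T k x y → ¬ B.HasCut T j x y

/-- Very untimed: for every `k ≥ 1`, no depth `k` pair has a `(k+1)` cut. -/
def VeryUntimed (T : B.PathSpace ≃ B.PathSpace) : Prop :=
  ∀ k : ℕ, 1 ≤ k →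
    ∀ x y : B.PathSpace, B.DepthPair T k x y → ¬ B.HasCut T (k + 1) x y

/-- Finite paths from the root to level `n`. -/
def FinPath (n : ℕ) : Type :=
  { f : (i : Fin n) → B.E i.val //
    ∀ (i : ℕ) (h : i + 1 < n), B.tgt (f ⟨i, by omega⟩) = B.src (f ⟨i + 1, h⟩) }

/-- The lexicographic (from the end) order on finite paths to level `n` induced by
the orders on the edges. -/
def finLT {n : ℕ} (p q : B.FinPath n) : Prop :=
  ∃ (N : ℕ) (h : N < n), B.elt (p.1 ⟨N, h⟩) (q.1 ⟨N, h⟩) ∧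
    ∀ (i : ℕ) (hi : i < n), N < i → p.1 ⟨i, hi⟩ = q.1 ⟨i, hi⟩

/-- The finite path `p` to level `n` ends at the vertex `v`. -/
def EndsAt {n : ℕ} (p : B.FinPath n) (v : B.V n) : Prop :=
  ∀ (m : ℕ) (h : n = m + 1), B.tgt (p.1 ⟨m, by omega⟩) = B.castV h v

/-- The initial segment of an infinite path, from the root to level `n`. -/
def pathInit (x : B.PathSpace) (n : ℕ) : B.FinPath n :=
  ⟨fun i => x.1 i.val, fun i _ => x.2 i⟩

/-- The vertex of an infinite path at level `n`. -/
def pathVert (x : B.PathSpace) (n : ℕ) : B.V n := B.src (x.1 n)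

theorem pathInit_endsAt (x : B.PathSpace) (n : ℕ) :
    B.EndsAt (B.pathInit x n) (B.pathVert x n) := by
  intro m h
  subst h
  exact x.2 m

/-- Truncation of a finite path to a lower level. -/
def truncTo {n : ℕ} (k : ℕ) (hk : k ≤ n) (p : B.FinPath n) : B.FinPath k :=
  ⟨fun i => p.1 ⟨i.val, by omega⟩, fun i h => p.2 i (by omega)⟩

/-- Paths `x, x'` are `k`-equivalent at level `n`: there is an order isomorphism
between the sets of finite paths from the root into their level-`n` vertices which
preserves truncations to level `k` (equality of `k`-basic blocks) and which matches
the initial segment of `x` with the initial segment of `x'` (the "dot" is in the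
same place). -/
def KEquivAt (k n : ℕ) (x x' : B.PathSpace) : Prop :=
  ∃ φ : { p : B.FinPath n // B.EndsAt p (B.pathVert x n) } ≃
      { p : B.FinPath n // B.EndsAt p (B.pathVert x' n) },
    (∀ p q, B.finLT p.1 q.1 ↔ B.finLT (φ p).1 (φ q).1) ∧
    (∀ p (i : ℕ) (hik : i < k) (hin : i < n), ((φ p).1).1 ⟨i, hin⟩ = (p.1).1 ⟨i, hin⟩) ∧
    φ ⟨B.pathInit x n, B.pathInit_endsAt x n⟩ = ⟨B.pathInit x' n, B.pathInit_endsAt x' n⟩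

/-- Paths are `k`-equivalent: they agree from the root to level `k` and are
`k`-equivalent at every level `n > k`. -/
def KEquivPaths (k : ℕ) (x x' : B.PathSpace) : Prop :=
  (∀ i : ℕ, i < k → x.1 i = x'.1 i) ∧ ∀ n : ℕ, k < n → B.KEquivAt k n x x'

/-- Standard nonexpansive: for every `k ≥ 1` there is a pair of distinct
`k`-equivalent paths. -/
def SNE : Prop := ∀ k : ℕ, 1 ≤ k → ∃ x x' : B.PathSpace, x ≠ x' ∧ B.KEquivPaths k x x'

/-!  ### Telescoping  -/

theorem castV_eq_of_heq {m n : ℕ} (h : m = n) {v : B.V m} {w : B.V n} (hw : HEq v w) :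
    B.castV h v = w := by
  subst h
  exact eq_of_heq hw

theorem castV_heq {m n : ℕ} (h : m = n) (v : B.V m) : HEq (B.castV h v) v := by
  subst h
  rfl

theorem castV_inj {m n : ℕ} (h : m = n) {v w : B.V m}
    (hvw : B.castV h v = B.castV h w) : v = w := by
  subst h
  exact hvw

def castE {m n : ℕ} (h : m = n) (e : B.E m) : B.E n := h ▸ e

noncomputable def chainFrom (a : ℕ) (v : B.V a) : (i : ℕ) → B.E (a + i)
  | 0 => (B.hasOut a v).choose
  | i + 1 => (B.hasOut (a + i + 1) (B.tgt (chainFrom a v i))).choose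

theorem chainFrom_src_zero (a : ℕ) (v : B.V a) : B.src (B.chainFrom a v 0) = v :=
  (B.hasOut a v).choose_spec

theorem chainFrom_src_succ (a : ℕ) (v : B.V a) (i : ℕ) :
    B.src (B.chainFrom a v (i + 1)) = B.tgt (B.chainFrom a v i) :=
  (B.hasOut (a + i + 1) (B.tgt (B.chainFrom a v i))).choose_spec

noncomputable def chainTo (a : ℕ) : (j : ℕ) → (w : B.V (a + j + 1)) → (i : ℕ) → i ≤ j → B.E (a + i)
  | 0, w, i, _ => B.castE (by omega : a + 0 = a + i) (B.hasIn a w).choose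
  | j + 1, w, i, _ =>
      if h : i ≤ j then chainTo a j (B.src (B.hasIn (a + j + 1) w).choose) i h
      else B.castE (by omega : a + (j + 1) = a + i) (B.hasIn (a + j + 1) w).choose

theorem chainTo_tgt_last (a : ℕ) : ∀ (j : ℕ) (w : B.V (a + j + 1)),
    B.tgt (B.chainTo a j w j le_rfl) = w := by
  intro j w
  cases j with
  | zero =>
      simp only [chainTo]
      exact (B.hasIn a w).choose_spec
  | succ j =>
      simp only [chainTo]
      rw [dif_neg (by omega : ¬ j + 1 ≤ j)]
      exact (B.hasIn (a + j + 1) w).choose_spec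

theorem chainTo_chain (a : ℕ) : ∀ (j : ℕ) (w : B.V (a + j + 1)) (i : ℕ) (h : i + 1 ≤ j)
    (h' : i ≤ j), B.tgt (B.chainTo a j w i h') = B.src (B.chainTo a j w (i + 1) h) := by
  intro j
  induction j with
  | zero => intro w i h h'; omega
  | succ j ih =>
      intro w i h h'
      by_cases hij : i + 1 ≤ j
      · simp only [chainTo]
        rw [dif_pos (by omega : i ≤ j), dif_pos hij]
        exact ih _ i hij (by omega)
      · have hi : i = j := by omega
        subst hi
        simp only [chainTo]
        rw [dif_pos (le_refl i), dif_neg (by omega : ¬ i + 1 ≤ i)]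
        exact B.chainTo_tgt_last a i _


def TelE (a b : ℕ) : Type :=
  { f : (i : Fin (b - a)) → B.E (a + i.val) //
    ∀ (i : ℕ) (h : i + 1 < b - a), B.tgt (f ⟨i, by omega⟩) = B.src (f ⟨i + 1, h⟩) }

def telSrc {a b : ℕ} (hab : a < b) (f : B.TelE a b) : B.V a :=
  B.src (f.1 ⟨0, by omega⟩)

def telTgt {a b : ℕ} (hab : a < b) (f : B.TelE a b) : B.V b :=
  B.castV (by omega : a + (b - a - 1) + 1 = b) (B.tgt (f.1 ⟨b - a - 1, by omega⟩))

def telLT {a b : ℕ} (f g : B.TelE a b) : Prop :=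
  ∃ (N : ℕ) (h : N < b - a), B.elt (f.1 ⟨N, h⟩) (g.1 ⟨N, h⟩) ∧
    ∀ (i : ℕ) (hi : i < b - a), N < i → f.1 ⟨i, hi⟩ = g.1 ⟨i, hi⟩

noncomputable def Telescope (ns : ℕ → ℕ) (hmono : StrictMono ns) (h0 : ns 0 = 0) : BDiagram where
  V l := B.V (ns l)
  E l := B.TelE (ns l) (ns (l + 1))
  fintV l := B.fintV (ns l)
  fintE l := by
    classical
    letI : ∀ i : Fin (ns (l + 1) - ns l), Fintype (B.E (ns l + i.val)) := fun i => B.fintE _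
    exact Subtype.fintype _
  nonV l := B.nonV (ns l)
  rootSubsingleton := by show Subsingleton (B.V (ns 0)); rw [h0]; exact B.rootSubsingleton
  src {l} f := B.telSrc (hmono (Nat.lt_succ_self l)) f
  tgt {l} f := B.telTgt (hmono (Nat.lt_succ_self l)) f
  hasOut := by
    intro l v
    refine ⟨⟨fun i => B.chainFrom (ns l) v i.val,
      fun i h => (B.chainFrom_src_succ (ns l) v i).symm⟩, ?_⟩
    exact B.chainFrom_src_zero (ns l) v
  hasIn := by
    intro l w
    have hab : ns l < ns (l + 1) := hmono (Nat.lt_succ_self l)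
    have hj : ns l + (ns (l + 1) - ns l - 1) + 1 = ns (l + 1) := by omega
    refine ⟨⟨fun i => B.chainTo (ns l) (ns (l + 1) - ns l - 1) (B.castV hj.symm w) i.val
        (by omega), fun i h => B.chainTo_chain _ _ _ i (by omega) (by omega)⟩, ?_⟩
    show B.castV (by omega) (B.tgt (B.chainTo (ns l) (ns (l + 1) - ns l - 1)
      (B.castV hj.symm w) (ns (l + 1) - ns l - 1) (by omega))) = w
    rw [B.chainTo_tgt_last]
    exact B.castV_eq_of_heq _ (B.castV_heq _ w)
  elt {l} f g := B.telLT f g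
  elt_tgt := by
    rintro l f g ⟨N, hN, hlt, hgt⟩
    show B.telTgt _ f = B.telTgt _ g
    unfold telTgt
    refine congrArg (B.castV _) ?_
    rcases eq_or_lt_of_le (show N ≤ ns (l + 1) - ns l - 1 by omega) with h | h
    · subst h
      exact B.elt_tgt _ _ _ hlt
    · exact congrArg B.tgt (hgt _ (by omega) h)
  elt_irrefl := by
    rintro l f ⟨N, h, hlt, -⟩
    exact B.elt_irrefl _ _ hlt
  elt_trans := by
    rintro l f g h ⟨N₁, hN₁, hlt₁, hgt₁⟩ ⟨N₂, hN₂, hlt₂, hgt₂⟩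
    rcases lt_trichotomy N₁ N₂ with hc | hc | hc
    · exact ⟨N₂, hN₂, by rw [hgt₁ N₂ hN₂ hc]; exact hlt₂,
        fun i hi hN => (hgt₁ i hi (by omega)).trans (hgt₂ i hi hN)⟩
    · subst hc
      exact ⟨N₁, hN₁, B.elt_trans _ _ _ _ hlt₁ hlt₂,
        fun i hi hN => (hgt₁ i hi hN).trans (hgt₂ i hi hN)⟩
    · refine ⟨N₁, hN₁, ?_, fun i hi hN => (hgt₁ i hi hN).trans (hgt₂ i hi (by omega))⟩
      rw [← hgt₂ N₁ hN₁ hc]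
      exact hlt₁
  elt_total := by
    intro l f g htgt hne
    classical
    have hab : ns l < ns (l + 1) := hmono (Nat.lt_succ_self l)
    set b := ns (l + 1) - ns l with hb
    have hex : ∃ N, ∃ h : N < b, f.1 ⟨N, h⟩ ≠ g.1 ⟨N, h⟩ := by
      by_contra hco
      push_neg at hco
      exact hne (Subtype.ext (funext fun i => hco i.val i.isLt))
    set P : ℕ → Prop := fun N => ∃ h : N < b, f.1 ⟨N, h⟩ ≠ g.1 ⟨N, h⟩ with hP
    obtain ⟨N₀, hN₀⟩ := hex
    set N := Nat.findGreatest P b with hNdef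
    have hPN : P N := Nat.findGreatest_spec (le_of_lt hN₀.choose) hN₀
    have hafter : ∀ i (hi : i < b), N < i → f.1 ⟨i, hi⟩ = g.1 ⟨i, hi⟩ := by
      intro i hi hNi
      by_contra hcon
      exact Nat.findGreatest_is_greatest hNi (le_of_lt hi) ⟨hi, hcon⟩
    clear_value N
    obtain ⟨hNb, hNne⟩ := hPN
    have htgtN : B.tgt (f.1 ⟨N, hNb⟩) = B.tgt (g.1 ⟨N, hNb⟩) := by
      rcases eq_or_lt_of_le (show N ≤ b - 1 by omega) with h | h
      · -- N is the last index; use equality of targets of the composite edges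
        subst h
        exact B.castV_inj _ htgt
      · have h2 : f.1 ⟨N + 1, by omega⟩ = g.1 ⟨N + 1, by omega⟩ :=
          hafter (N + 1) (by omega) (by omega)
        rw [f.2 N (by omega), g.2 N (by omega), h2]
    rcases B.elt_total _ _ _ htgtN hNne with h | h
    · exact Or.inl ⟨N, hNb, h, hafter⟩
    · exact Or.inr ⟨N, hNb, h, fun i hi hN => (hafter i hi hN).symm⟩

def teleMap (ns : ℕ → ℕ) (hmono : StrictMono ns) (h0 : ns 0 = 0) (x : B.PathSpace) :
    (B.Telescope ns hmono h0).PathSpace :=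
  ⟨fun l => ⟨fun i => x.1 (ns l + i.val), fun i _ => x.2 (ns l + i)⟩, fun l => by
    have hab : ns l < ns (l + 1) := hmono (Nat.lt_succ_self l)
    have hm : ns l + (ns (l + 1) - ns l - 1) + 1 = ns (l + 1) := by omega
    show B.castV _ (B.tgt (x.1 (ns l + (ns (l + 1) - ns l - 1)))) = B.src (x.1 (ns (l + 1) + 0))
    rw [x.2 (ns l + (ns (l + 1) - ns l - 1))]
    exact B.castV_eq_of_heq _ (by rw [hm]; exact HEq.rfl)⟩


/-- Level `n+1` is uniformly ordered: there is a single nonempty block `P` of paths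
from the root to level `n` such that the `n`-basic block at every vertex at level
`n+1` is a positive power of `P`. -/
def UniformlyOrderedLevel (n : ℕ) : Prop :=
  ∃ (p : ℕ) (hp : 0 < p) (P : Fin p → B.FinPath n),
    ∀ v : B.V (n + 1), ∃ (m : ℕ), 0 < m ∧
      ∃ enum : Fin (m * p) ≃ { q : B.FinPath (n + 1) // B.EndsAt q v },
        (∀ i j : Fin (m * p), i < j ↔ B.finLT (enum i).1 (enum j).1) ∧
        (∀ i : Fin (m * p),
          B.truncTo n (Nat.le_succ n) (enum i).1 = P ⟨i.val % p, Nat.mod_lt _ hp⟩)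

/-- The ordinal label of an edge: its position in the linear order on the edges
into its target. -/
noncomputable def edgeLabel {n : ℕ} (e : B.E n) : ℕ := Nat.card { e' : B.E n // B.elt e' e }

/-- Deterministic: for every `n ≥ 1`, distinct edges with the same source at level
`n` have different ordinal labels. -/
def Deterministic : Prop :=
  ∀ n : ℕ, 1 ≤ n → ∀ e f : B.E n, B.src e = B.src f → e ≠ f →
    B.edgeLabel e ≠ B.edgeLabel f

end BDiagram

/-- A Bratteli–Vershik system: a simple, properly ordered ordered Bratteli diagram
together with its Vershik map. -/
structure BVSystem where
  B : BDiagram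
  T : B.PathSpace ≃ B.PathSpace
  proper : B.ProperlyOrdered
  simple : B.Simple
  vershik : B.IsVershik T

/-- Conjugacy of systems: an equivariant homeomorphism of the path spaces taking
minimal paths to minimal paths. -/
def Conjugate (S S' : BVSystem) : Prop :=
  ∃ φ : S.B.PathSpace ≃ S'.B.PathSpace,
    (@Continuous _ _ S.B.pathTop S'.B.pathTop φ) ∧
    (@Continuous _ _ S'.B.pathTop S.B.pathTop φ.symm) ∧
    (∀ x, φ (S.T x) = S'.T (φ x)) ∧
    (∀ x, S.B.IsMinPath x → S'.B.IsMinPath (φ x))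

/-- An odometer: a system whose diagram has exactly one vertex at every level. -/
def IsOdometer (S : BVSystem) : Prop := ∀ n, Subsingleton (S.B.V n)

namespace BDiagram

variable {B : BDiagram}

section FinPathOrder

variable {n : ℕ}

theorem finLT_irrefl (p : B.FinPath n) : ¬ B.finLT p p := by
  rintro ⟨N, hN, hlt, -⟩
  exact B.elt_irrefl _ _ hlt

theorem finLT_trans {p q r : B.FinPath n} : B.finLT p q → B.finLT q r → B.finLT p r := by
  rintro ⟨N₁, hN₁, hlt₁, hagree₁⟩ ⟨N₂, hN₂, hlt₂, hagree₂⟩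
  rcases lt_trichotomy N₁ N₂ with hc | rfl | hc
  · exact ⟨N₂, hN₂, hagree₁ N₂ hN₂ hc ▸ hlt₂,
      fun i hi hN => (hagree₁ i hi (hc.trans hN)).trans (hagree₂ i hi hN)⟩
  · exact ⟨N₁, hN₁, B.elt_trans _ _ _ _ hlt₁ hlt₂,
      fun i hi hN => (hagree₁ i hi hN).trans (hagree₂ i hi hN)⟩
  · exact ⟨N₁, hN₁, (hagree₂ N₁ hN₁ hc).symm ▸ hlt₁,
      fun i hi hN => (hagree₁ i hi hN).trans (hagree₂ i hi (hc.trans hN))⟩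

/-- The paths from the root to `v` in the order of the basic block at `v`. -/
abbrev PathsTo (v : B.V n) : Type := { p : B.FinPath n // B.EndsAt p v }

instance (v : B.V n) : IsStrictOrder (B.PathsTo v) (fun p q => B.finLT p.1 q.1) where
  irrefl p := finLT_irrefl p.1
  trans _ _ _ := finLT_trans

instance (v : B.V n) : PartialOrder (B.PathsTo v) :=
  partialOrderOfSO fun p q : B.PathsTo v => B.finLT p.1 q.1

instance (v : B.V n) : Finite (B.PathsTo v) := by
  have := B.fintE
  have : Finite (B.FinPath n) := Subtype.finite
  exact Subtype.finite

def initAt (x : B.PathSpace) (n : ℕ) : B.PathsTo (B.pathVert x n) :=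
  ⟨B.pathInit x n, B.pathInit_endsAt x n⟩

end FinPathOrder

section PathOrder

theorem pathLT_or_pathLT_of_agree {x y : B.PathSpace} (hne : x ≠ y) :
    ∀ M : ℕ, (∀ i, M ≤ i → x.1 i = y.1 i) → B.pathLT x y ∨ B.pathLT y x
  | 0, hagree => absurd (Subtype.ext (funext fun i => hagree i i.zero_le)) hne
  | M + 1, hagree => by
    by_cases hM : x.1 M = y.1 M
    · refine pathLT_or_pathLT_of_agree hne M fun i hi => ?_
      rcases hi.eq_or_lt with rfl | hi
      exacts [hM, hagree i hi]
    · have htgt : B.tgt (x.1 M) = B.tgt (y.1 M) := by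
        rw [x.2, y.2, hagree (M + 1) le_rfl]
      refine (B.elt_total _ _ _ htgt hM).imp (fun h => ⟨M, h, fun i hi => hagree i hi⟩)
        (fun h => ⟨M, h, fun i hi => (hagree i hi).symm⟩)

theorem pathLT_iff_finLT_pathInit {x y : B.PathSpace} {n : ℕ}
    (htail : ∀ i, n ≤ i → x.1 i = y.1 i) :
    B.pathLT x y ↔ B.finLT (B.pathInit x n) (B.pathInit y n) := by
  constructor
  · rintro ⟨N, hlt, hagree⟩
    have hN : N < n := by
      by_contra! hN
      exact B.elt_irrefl _ _ (htail N hN ▸ hlt)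
    exact ⟨N, hN, hlt, fun i _ hi => hagree i hi⟩
  · rintro ⟨N, hN, hlt, hagree⟩
    refine ⟨N, hlt, fun i hi => ?_⟩
    by_cases hin : i < n
    exacts [hagree i hin hi, htail i (not_lt.1 hin)]

theorem tail_eq_of_pathLT_of_pathLT {x y z : B.PathSpace} {n : ℕ}
    (hxy : B.pathLT x y) (hyz : B.pathLT y z) (htail : ∀ i, n ≤ i → x.1 i = z.1 i) :
    ∀ i, n ≤ i → x.1 i = y.1 i := by
  obtain ⟨N, hlt, hagree⟩ := hxy
  obtain ⟨M, hlt', hagree'⟩ := hyz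
  suffices hN : N < n from fun i hi => hagree i (hN.trans_le hi)
  by_contra! hN
  rcases lt_trichotomy M N with hc | rfl | hc
  · rw [hagree' N hc, ← htail N hN] at hlt
    exact B.elt_irrefl _ _ hlt
  · rw [← htail M hN] at hlt'
    exact B.elt_irrefl _ _ (B.elt_trans _ _ _ _ hlt hlt')
  · rw [← hagree M hc, ← htail M (hN.trans hc.le)] at hlt'
    exact B.elt_irrefl _ _ hlt'

theorem endsAt_pathInit_of_apply_eq {x y : B.PathSpace} {n : ℕ} (h : x.1 n = y.1 n) :
    B.EndsAt (B.pathInit x n) (B.pathVert y n) :=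
  (show B.pathVert x n = B.pathVert y n from congrArg B.src h) ▸ B.pathInit_endsAt x n

end PathOrder

section Concat

variable {n : ℕ}

def concat (x : B.PathSpace) (p : B.PathsTo (B.pathVert x n)) : B.PathSpace :=
  ⟨fun i => if h : i < n then p.1.1 ⟨i, h⟩ else x.1 i, fun i => by
    by_cases h₁ : i + 1 < n
    · simp only [dif_pos h₁, dif_pos (Nat.lt_of_succ_lt h₁)]
      exact p.1.2 i h₁
    · by_cases h₂ : i < n
      · obtain rfl : n = i + 1 := by omega
        simp only [dif_pos h₂, dif_neg h₁]
        exact p.2 i rfl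
      · simp only [dif_neg h₂, dif_neg h₁]
        exact x.2 i⟩

theorem concat_apply_of_le (x : B.PathSpace) (p : B.PathsTo (B.pathVert x n)) {i : ℕ}
    (h : n ≤ i) : (B.concat x p).1 i = x.1 i :=
  dif_neg (not_lt.2 h)

theorem pathInit_concat (x : B.PathSpace) (p : B.PathsTo (B.pathVert x n)) :
    B.pathInit (B.concat x p) n = p.1 :=
  Subtype.ext (funext fun i => dif_pos i.isLt)

theorem pathVert_concat (x : B.PathSpace) (p : B.PathsTo (B.pathVert x n)) :
    B.pathVert (B.concat x p) n = B.pathVert x n :=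
  congrArg B.src (B.concat_apply_of_le x p le_rfl)

end Concat

section Vershik

variable {T : B.PathSpace ≃ B.PathSpace} {n : ℕ}

theorem vershik_eq_of_covBy (hT : B.IsVershik T) {x y : B.PathSpace}
    (htail : ∀ i, n ≤ i → x.1 i = y.1 i) (hlt : B.finLT (B.pathInit x n) (B.pathInit y n))
    (hcov : ∀ r, B.EndsAt r (B.pathVert x n) →
      B.finLT (B.pathInit x n) r → ¬ B.finLT r (B.pathInit y n)) :
    T x = y := by
  have hxy : B.pathLT x y := (pathLT_iff_finLT_pathInit htail).2 hlt
  have hxmax : ¬ B.IsMaxPath x := fun hmax =>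
    let ⟨N, hN, _⟩ := hxy
    hmax N _ hN
  obtain ⟨hxTx, hnext⟩ := hT.1 x hxmax
  by_contra hne
  obtain ⟨N, -, hagree⟩ := id hxTx
  rcases pathLT_or_pathLT_of_agree hne (max N n + 1)
    (fun i hi => (hagree i (by omega)).symm.trans (htail i (by omega))) with hTy | hyT
  · have htail' := tail_eq_of_pathLT_of_pathLT hxTx hTy htail
    exact hcov _ (endsAt_pathInit_of_apply_eq (htail' n le_rfl).symm)
      ((pathLT_iff_finLT_pathInit htail').1 hxTx)
      ((pathLT_iff_finLT_pathInit fun i hi => (htail' i hi).symm.trans (htail i hi)).1 hTy)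
  · exact hnext y hxy hyT

theorem vershik_eq_concat (hT : B.IsVershik T) {x : B.PathSpace}
    {q : B.PathsTo (B.pathVert x n)} (hq : B.initAt x n ⋖ q) : T x = B.concat x q := by
  refine vershik_eq_of_covBy hT (fun i hi => (B.concat_apply_of_le x q hi).symm) ?_ ?_
  · rw [pathInit_concat]
    exact hq.1
  · rw [pathInit_concat]
    exact fun r hr => hq.2 (c := ⟨r, hr⟩)

theorem vershik_symm_eq_concat (hT : B.IsVershik T) {x : B.PathSpace}
    {q : B.PathsTo (B.pathVert x n)} (hq : q ⋖ B.initAt x n) : T.symm x = B.concat x q := by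
  rw [Equiv.symm_apply_eq]
  refine (vershik_eq_of_covBy hT (fun i hi => B.concat_apply_of_le x q hi) ?_ ?_).symm
  · rw [pathInit_concat]
    exact hq.1
  · rw [pathInit_concat, pathVert_concat]
    exact fun r hr => hq.2 (c := ⟨r, hr⟩)

theorem iterZ_add_one_apply (m : ℤ) (x : B.PathSpace) :
    B.iterZ T (m + 1) x = T (B.iterZ T m x) := by
  rw [iterZ, ← mul_self_zpow, Equiv.Perm.mul_apply]
  rfl

theorem iterZ_sub_one_apply (m : ℤ) (x : B.PathSpace) :
    B.iterZ T (m - 1) x = T.symm (B.iterZ T m x) := by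
  rw [iterZ, sub_eq_neg_add, zpow_add, zpow_neg_one, Equiv.Perm.mul_apply]
  rfl

theorem isMaxPath_of_frequently_isMax (hT : B.IsVershik T) {x : B.PathSpace}
    (h : ∃ᶠ n in Filter.atTop, IsMax (B.initAt x n)) : B.IsMaxPath x := by
  by_contra hmax
  obtain ⟨⟨N, hlt, hagree⟩, -⟩ := hT.1 x hmax
  obtain ⟨n, hn, htop⟩ := (Filter.frequently_atTop.1 h) (N + 1)
  have htail : ∀ i, n ≤ i → x.1 i = (T x).1 i := fun i hi => hagree i (by omega)
  exact (htop.not_lt (b := ⟨_, endsAt_pathInit_of_apply_eq (htail n le_rfl).symm⟩))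
    ((pathLT_iff_finLT_pathInit htail).1 ⟨N, hlt, hagree⟩)

theorem isMinPath_of_frequently_isMin (hT : B.IsVershik T) {x : B.PathSpace}
    (h : ∃ᶠ n in Filter.atTop, IsMin (B.initAt x n)) : B.IsMinPath x := by
  by_cases hmax : B.IsMaxPath (T.symm x)
  · simpa only [Equiv.apply_symm_apply] using hT.2 _ hmax
  obtain ⟨⟨N, hlt, hagree⟩, -⟩ := hT.1 _ hmax
  rw [Equiv.apply_symm_apply] at hlt hagree
  obtain ⟨n, hn, hbot⟩ := (Filter.frequently_atTop.1 h) (N + 1)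
  have htail : ∀ i, n ≤ i → (T.symm x).1 i = x.1 i := fun i hi => hagree i (by omega)
  exact (hbot.not_lt (b := ⟨_, endsAt_pathInit_of_apply_eq (htail n le_rfl)⟩)
    ((pathLT_iff_finLT_pathInit htail).1 ⟨N, hlt, hagree⟩)).elim

end Vershik

section KEquiv

variable {k n : ℕ} {x x' : B.PathSpace}

theorem KEquivAt.exists_orderIso (h : B.KEquivAt k n x x') :
    ∃ e : B.PathsTo (B.pathVert x n) ≃o B.PathsTo (B.pathVert x' n),
      (∀ p (i : ℕ), i < k → ∀ hin : i < n, (e p).1.1 ⟨i, hin⟩ = p.1.1 ⟨i, hin⟩) ∧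
      e (B.initAt x n) = B.initAt x' n := by
  obtain ⟨φ, hord, hcoord, hinit⟩ := h
  exact ⟨OrderIso.ofRelIsoLT ⟨φ, (hord _ _).symm⟩, hcoord, hinit⟩

theorem kEquivAt_of_orderIso {v v' : B.V n} (e : B.PathsTo v ≃o B.PathsTo v')
    (hcoord : ∀ p (i : ℕ), i < k → ∀ hin : i < n, (e p).1.1 ⟨i, hin⟩ = p.1.1 ⟨i, hin⟩)
    (hv : B.pathVert x n = v) (hv' : B.pathVert x' n = v')
    (hinit : ∀ h, (e ⟨B.pathInit x n, h⟩).1 = B.pathInit x' n) : B.KEquivAt k n x x' := by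
  subst hv hv'
  exact ⟨e.toEquiv, fun p q => e.lt_iff_lt.symm, hcoord, Subtype.ext (hinit _)⟩

theorem KEquivAt.apply_eq (h : B.KEquivAt k n x x') {i : ℕ} (hik : i < k) (hin : i < n) :
    x'.1 i = x.1 i := by
  obtain ⟨e, hcoord, hinit⟩ := h.exists_orderIso
  have := hcoord (B.initAt x n) i hik hin
  rwa [hinit] at this

theorem KEquivAt.isMax_initAt (h : B.KEquivAt k n x x') (hx : IsMax (B.initAt x n)) :
    IsMax (B.initAt x' n) := by
  obtain ⟨e, -, hinit⟩ := h.exists_orderIso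
  exact hinit ▸ e.isMax_apply.2 hx

theorem KEquivAt.isMin_initAt (h : B.KEquivAt k n x x') (hx : IsMin (B.initAt x n)) :
    IsMin (B.initAt x' n) := by
  obtain ⟨e, -, hinit⟩ := h.exists_orderIso
  exact hinit ▸ e.isMin_apply.2 hx

theorem kEquivAt_concat (e : B.PathsTo (B.pathVert x n) ≃o B.PathsTo (B.pathVert x' n))
    (hcoord : ∀ p (i : ℕ), i < k → ∀ hin : i < n, (e p).1.1 ⟨i, hin⟩ = p.1.1 ⟨i, hin⟩)
    (q : B.PathsTo (B.pathVert x n)) : B.KEquivAt k n (B.concat x q) (B.concat x' (e q)) :=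
  kEquivAt_of_orderIso e hcoord (B.pathVert_concat x q) (B.pathVert_concat x' (e q))
    fun _ => by simp only [pathInit_concat]

variable {T : B.PathSpace ≃ B.PathSpace}

theorem KEquivAt.vershik (hT : B.IsVershik T) (h : B.KEquivAt k n x x')
    (hx : ¬ IsMax (B.initAt x n)) : B.KEquivAt k n (T x) (T x') := by
  obtain ⟨e, hcoord, hinit⟩ := h.exists_orderIso
  obtain ⟨q, hq⟩ := exists_covBy_of_wellFoundedLT hx
  have hq' : B.initAt x' n ⋖ e q := hinit ▸ (apply_covBy_apply_iff e).2 hq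
  rw [vershik_eq_concat hT hq, vershik_eq_concat hT hq']
  exact kEquivAt_concat e hcoord q

theorem KEquivAt.vershik_symm (hT : B.IsVershik T) (h : B.KEquivAt k n x x')
    (hx : ¬ IsMin (B.initAt x n)) : B.KEquivAt k n (T.symm x) (T.symm x') := by
  obtain ⟨e, hcoord, hinit⟩ := h.exists_orderIso
  obtain ⟨q, hq⟩ := exists_covBy_of_wellFoundedGT hx
  have hq' : e q ⋖ B.initAt x' n := hinit ▸ (apply_covBy_apply_iff e).2 hq
  rw [vershik_symm_eq_concat hT hq, vershik_symm_eq_concat hT hq']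
  exact kEquivAt_concat e hcoord q

theorem infinite_kEquivAt_vershik (hmax : ∃! z, B.IsMaxPath z) (hT : B.IsVershik T)
    (hne : x ≠ x') (h : {n | k < n ∧ B.KEquivAt k n x x'}.Infinite) :
    {n | k < n ∧ B.KEquivAt k n (T x) (T x')}.Infinite := by
  have hsub : {n | k < n ∧ B.KEquivAt k n x x'} ⊆
      {n | IsMax (B.initAt x n) ∧ IsMax (B.initAt x' n)} ∪
        {n | k < n ∧ B.KEquivAt k n (T x) (T x')} := by
    rintro n ⟨hkn, hn⟩
    by_cases htop : IsMax (B.initAt x n)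
    · exact Or.inl ⟨htop, hn.isMax_initAt htop⟩
    · exact Or.inr ⟨hkn, hn.vershik hT htop⟩
  refine (Set.infinite_union.1 (h.mono hsub)).resolve_left fun htop => hne ?_
  have hfreq := Nat.frequently_atTop_iff_infinite.2 htop
  exact hmax.unique (isMaxPath_of_frequently_isMax hT (hfreq.mono fun _ => And.left))
    (isMaxPath_of_frequently_isMax hT (hfreq.mono fun _ => And.right))

theorem infinite_kEquivAt_vershik_symm (hmin : ∃! z, B.IsMinPath z) (hT : B.IsVershik T)
    (hne : x ≠ x') (h : {n | k < n ∧ B.KEquivAt k n x x'}.Infinite) :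
    {n | k < n ∧ B.KEquivAt k n (T.symm x) (T.symm x')}.Infinite := by
  have hsub : {n | k < n ∧ B.KEquivAt k n x x'} ⊆
      {n | IsMin (B.initAt x n) ∧ IsMin (B.initAt x' n)} ∪
        {n | k < n ∧ B.KEquivAt k n (T.symm x) (T.symm x')} := by
    rintro n ⟨hkn, hn⟩
    by_cases hbot : IsMin (B.initAt x n)
    · exact Or.inl ⟨hbot, hn.isMin_initAt hbot⟩
    · exact Or.inr ⟨hkn, hn.vershik_symm hT hbot⟩
  refine (Set.infinite_union.1 (h.mono hsub)).resolve_left fun hbot => hne ?_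
  have hfreq := Nat.frequently_atTop_iff_infinite.2 hbot
  exact hmin.unique (isMinPath_of_frequently_isMin hT (hfreq.mono fun _ => And.left))
    (isMinPath_of_frequently_isMin hT (hfreq.mono fun _ => And.right))

theorem infinite_kEquivAt_iterZ (hproper : B.ProperlyOrdered) (hT : B.IsVershik T)
    (hne : x ≠ x') (h : {n | k < n ∧ B.KEquivAt k n x x'}.Infinite) (m : ℤ) :
    {n | k < n ∧ B.KEquivAt k n (B.iterZ T m x) (B.iterZ T m x')}.Infinite := by
  induction m using Int.induction_on with
  | zero => simpa only [iterZ, zpow_zero, Equiv.Perm.one_apply] using h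
  | succ m ih =>
    simpa only [iterZ_add_one_apply] using
      infinite_kEquivAt_vershik hproper.2 hT ((B.iterZ T _).injective.ne hne) ih
  | pred m ih =>
    simpa only [iterZ_sub_one_apply] using
      infinite_kEquivAt_vershik_symm hproper.1 hT ((B.iterZ T _).injective.ne hne) ih

end KEquiv

end BDiagram

theorem kequiv_at_infinitely_many_levels_same_coding_general
    (B : BDiagram) (T : B.PathSpace ≃ B.PathSpace)
    (hproper : B.ProperlyOrdered) (hT : B.IsVershik T)
    (k : ℕ) (x x' : B.PathSpace) (hne : x ≠ x')
    (hinf : {n : ℕ | k < n ∧ B.KEquivAt k n x x'}.Infinite) :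
    B.SameCoding T k x x' := by
  intro m i hik
  obtain ⟨n, hkn, hn⟩ := (B.infinite_kEquivAt_iterZ hproper hT hne hinf m).nonempty
  exact (hn.apply_eq hik (hik.trans hkn)).symm

/-- In a simple, properly ordered Bratteli–Vershik system, if two
distinct paths are `k`-equivalent at infinitely many levels `n > k` (`k ≥ 1`),
then they have the same `k`-coding. -/
theorem kequiv_at_infinitely_many_levels_same_coding
    (B : BDiagram) (T : B.PathSpace ≃ B.PathSpace)
    (hproper : B.ProperlyOrdered) (hsimple : B.Simple) (hT : B.IsVershik T)
    (k : ℕ) (hk : 1 ≤ k) (x x' : B.PathSpace) (hne : x ≠ x')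
    (hinf : {n : ℕ | k < n ∧ B.KEquivAt k n x x'}.Infinite) :
    B.SameCoding T k x x' :=
  kequiv_at_infinitely_many_levels_same_coding_general B T hproper hT k x x' hne hinf
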